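/- Let Q : S × A → ℝ with 0 < Q(s,a) bounded above, let d be a probability distribution on S, and suppose the variational family consists of policies π_θ with entropies uniformly bounded above. Then for each fixed ε > 0 the objective L(ε, θ) = E_{d, π_θ}[Q/ε] + E_d[H(π_θ)] is bounded above; consequently if some parameter ω° achieves ε_{ω°} = 0 (and L(ω°, θ) = +∞ for some non-deterministic θ), then every maximizer ω* of sup_θ L(ω, θ) satisfies ε_{ω*} = 0. -/

import Mathlib

/-! For fixed `ε > 0` the objective is a `d`-average of `E/ε + H`, where the expected reward `E`
and the entropy `H` are uniformly bounded, so it is bounded above by a real constant. Hence the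
supremum over `θ` is finite for every `ω` with `ε_ω > 0`, whereas it is `⊤` at `ω°`; a
maximizer therefore cannot have `ε_ω > 0`. -/

open MeasureTheory

/-- The junk value `0` of a non-integrable integral is why the bound is `max C 0`. -/
lemma integral_mul_le_max_of_le {S : Type*} [MeasurableSpace S] {μ : Measure S}
    {d f : S → ℝ} {C : ℝ} (hd : ∀ s, 0 ≤ d s) (hd1 : ∫ s, d s ∂μ = 1) (hf : ∀ s, f s ≤ C) :
    ∫ s, d s * f s ∂μ ≤ max C 0 := by
  have hdInt : Integrable d μ := by
    by_contra h
    rw [integral_undef h] at hd1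
    exact zero_ne_one hd1
  by_cases hInt : Integrable (fun s => d s * f s) μ
  · calc ∫ s, d s * f s ∂μ
        ≤ ∫ s, d s * max C 0 ∂μ :=
          integral_mono hInt (hdInt.mul_const _) fun s =>
            mul_le_mul_of_nonneg_left ((hf s).trans (le_max_left _ _)) (hd s)
      _ = max C 0 := by rw [integral_mul_const, hd1, one_mul]
  · rw [integral_undef hInt]
    exact le_max_right _ _

lemma integral_mul_div_le {S A : Type*} [MeasurableSpace S] [MeasurableSpace A]
    {μS : Measure S} {μA : Measure A} {d : S → ℝ} {p q : S → A → ℝ} {M ε : ℝ}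
    (hd : ∀ s, 0 ≤ d s) (hd1 : ∫ s, d s ∂μS = 1) (hE : ∀ s, |∫ a, p s a * q s a ∂μA| ≤ M)
    (hε : 0 < ε) :
    ∫ s, d s * ∫ a, p s a * (q s a / ε) ∂μA ∂μS ≤ max (M / ε) 0 := by
  refine integral_mul_le_max_of_le hd hd1 fun s => ?_
  simp_rw [← mul_div_assoc, integral_div]
  exact div_le_div_of_nonneg_right ((le_abs_self _).trans (hE s)) hε.le

lemma iSup_ne_top_of_le_coe {ι : Type*} {f : ι → EReal} {B : ℝ} (hf : ∀ i, f i ≤ B) :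
    ⨆ i, f i ≠ ⊤ :=
  ne_top_of_le_ne_top (EReal.coe_ne_top B) (iSup_le hf)

theorem stmt_15_general {S A Θ Ω : Type*} [MeasurableSpace S] [MeasurableSpace A]
    (μS : Measure S) (μA : Measure A)
    (Q : S → A → ℝ)
    (d : S → ℝ) (hd : ∀ s, 0 ≤ d s) (hd1 : ∫ s, d s ∂μS = 1)
    (π : Θ → S → A → ℝ)
    (Hent : Θ → S → ℝ)
    (hHbdd : ∃ Hmax : ℝ, ∀ θ s, Hent θ s ≤ Hmax)
    (hEbdd : ∃ M : ℝ, ∀ θ s, |∫ a, π θ s a * Q s a ∂μA| ≤ M)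
    (L : ℝ → Θ → ℝ)
    (hL : ∀ ε θ, L ε θ
      = (∫ s, d s * ∫ a, π θ s a * (Q s a / ε) ∂μA ∂μS)
        + ∫ s, d s * Hent θ s ∂μS)
    (εω : Ω → ℝ) (hεnn : ∀ ω, 0 ≤ εω ω)
    (Lω : Ω → Θ → EReal)
    (hLω : ∀ ω θ, 0 < εω ω → Lω ω θ = ((L (εω ω) θ : ℝ) : EReal))
    (hω0 : ∃ ω0, εω ω0 = 0 ∧ ∃ θ0, Lω ω0 θ0 = ⊤) :
    (∀ ε : ℝ, 0 < ε → ∃ B : ℝ, ∀ θ, L ε θ ≤ B) ∧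
      ∀ ωstar : Ω, (∀ ω, (⨆ θ, Lω ω θ) ≤ ⨆ θ, Lω ωstar θ) → εω ωstar = 0 := by
  obtain ⟨M, hM⟩ := hEbdd
  obtain ⟨Hmax, hHmax⟩ := hHbdd
  have hbound : ∀ ε, 0 < ε → ∀ θ, L ε θ ≤ max (M / ε) 0 + max Hmax 0 := fun ε hε θ => by
    rw [hL]
    exact add_le_add (integral_mul_div_le hd hd1 (hM θ) hε)
      (integral_mul_le_max_of_le hd hd1 (hHmax θ))
  refine ⟨fun ε hε => ⟨_, hbound ε hε⟩, fun ωstar hmax => ?_⟩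
  obtain ⟨ω0, -, θ0, htop⟩ := hω0
  by_contra hne
  have hpos : 0 < εω ωstar := (hεnn ωstar).lt_of_ne' hne
  have hstar_top : ⨆ θ, Lω ωstar θ = ⊤ :=
    top_le_iff.mp (htop ▸ (le_iSup (Lω ω0) θ0).trans (hmax ω0))
  refine iSup_ne_top_of_le_coe (B := max (M / εω ωstar) 0 + max Hmax 0)
    (fun θ => ?_) hstar_top
  rw [hLω ωstar θ hpos]
  exact EReal.coe_le_coe_iff.mpr (hbound _ hpos θ)

theorem stmt_15 {S A Θ Ω : Type*} [MeasurableSpace S] [MeasurableSpace A]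
    (μS : Measure S) (μA : Measure A)
    (Q : S → A → ℝ) (hQpos : ∀ s a, 0 < Q s a)
    (hQbdd : ∃ M : ℝ, ∀ s a, Q s a ≤ M)
    (d : S → ℝ) (hd : ∀ s, 0 ≤ d s) (hd1 : ∫ s, d s ∂μS = 1)
    (π : Θ → S → A → ℝ)
    (Hent : Θ → S → ℝ)
    (hHent : ∀ θ s, Hent θ s = -∫ a, π θ s a * Real.log (π θ s a) ∂μA)
    (hHbdd : ∃ Hmax : ℝ, ∀ θ s, Hent θ s ≤ Hmax)
    (hEbdd : ∃ M : ℝ, ∀ θ s, |∫ a, π θ s a * Q s a ∂μA| ≤ M)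
    (L : ℝ → Θ → ℝ)
    (hL : ∀ ε θ, L ε θ
      = (∫ s, d s * ∫ a, π θ s a * (Q s a / ε) ∂μA ∂μS)
        + ∫ s, d s * Hent θ s ∂μS)
    (εω : Ω → ℝ) (hεnn : ∀ ω, 0 ≤ εω ω)
    (Lω : Ω → Θ → EReal)
    (hLω : ∀ ω θ, 0 < εω ω → Lω ω θ = ((L (εω ω) θ : ℝ) : EReal))
    (hω0 : ∃ ω0, εω ω0 = 0 ∧ ∃ θ0, Lω ω0 θ0 = ⊤) :
    (∀ ε : ℝ, 0 < ε → ∃ B : ℝ, ∀ θ, L ε θ ≤ B) ∧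
      ∀ ωstar : Ω, (∀ ω, (⨆ θ, Lω ω θ) ≤ ⨆ θ, Lω ωstar θ) → εω ωstar = 0 :=
  stmt_15_general μS μA Q d hd hd1 π Hent hHbdd hEbdd L hL εω hεnn Lω hLω hω0
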